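/- Let Λ be the set of sparsest solutions of: minimize ‖x‖₀ subject to ‖y − Ax‖₂ ≤ ε, Bx ≤ b, and suppose Λ is nonempty and bounded. Then there exists γ* > 0 such that for every x ∈ Λ and every i ∈ supp(x), |x_i| ≥ γ*. -/

import Mathlib

open Matrix Finset

/-- The ℓ₂ norm of a finite real vector. -/
noncomputable def l2 {ι : Type*} [Fintype ι] (v : ι → ℝ) : ℝ := Real.sqrt (∑ i, v i ^ 2)

/-- The ℓ₀ "norm": number of nonzero components. -/
noncomputable def l0 {n : ℕ} (x : Fin n → ℝ) : ℕ :=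
  (Finset.univ.filter fun i => x i ≠ 0).card

/-- The support of a vector as a finset. -/
noncomputable def spt {n : ℕ} (x : Fin n → ℝ) : Finset (Fin n) :=
  Finset.univ.filter fun i => x i ≠ 0

/-- Membership in the feasible set T = {x : ‖y - Ax‖₂ ≤ ε, Bx ≤ b}. -/
def feasible {m l n : ℕ} (A : Matrix (Fin m) (Fin n) ℝ) (B : Matrix (Fin l) (Fin n) ℝ)
    (y : Fin m → ℝ) (b : Fin l → ℝ) (ε : ℝ) (x : Fin n → ℝ) : Prop :=
  l2 (y - A.mulVec x) ≤ ε ∧ ∀ i, B.mulVec x i ≤ b i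

/-- x is a sparsest solution: feasible and minimizing ‖·‖₀ over T. -/
noncomputable def sparsest {m l n : ℕ} (A : Matrix (Fin m) (Fin n) ℝ)
    (B : Matrix (Fin l) (Fin n) ℝ) (y : Fin m → ℝ) (b : Fin l → ℝ) (ε : ℝ)
    (x : Fin n → ℝ) : Prop :=
  feasible A B y b ε x ∧ ∀ z, feasible A B y b ε z → l0 x ≤ l0 z

/-- Column submatrix indexed by S. -/
def colSub {m n : ℕ} (A : Matrix (Fin m) (Fin n) ℝ) (S : Finset (Fin n)) :
    Matrix (Fin m) {j // j ∈ S} ℝ :=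
  A.submatrix id Subtype.val

/-- Row-and-column submatrix with rows in I and columns in S. -/
def rcSub {l n : ℕ} (B : Matrix (Fin l) (Fin n) ℝ) (I : Finset (Fin l))
    (S : Finset (Fin n)) : Matrix {i // i ∈ I} {j // j ∈ S} ℝ :=
  B.submatrix Subtype.val Subtype.val

/-- Active index set of the constraints Bx ≤ b at x. -/
noncomputable def activeSet {l n : ℕ} (B : Matrix (Fin l) (Fin n) ℝ) (b : Fin l → ℝ)
    (x : Fin n → ℝ) : Finset (Fin l) :=
  Finset.univ.filter fun i => B.mulVec x i = b i

/-! For a fixed support `S`, the sparsest solutions with support exactly `S` form a closed set: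
a limit of such points is feasible (the feasible set is closed) and has support inside `S`, and
since no feasible point is sparser than `|S|`, its support is all of `S`. Boundedness makes this
set compact, so each `|x i|` with `i ∈ S` attains a positive minimum on it. Stating each such bound
as `∀ᶠ γ in 𝓝[>] 0` lets the finitely many pairs `(S, i)` be combined by `eventually_all`. -/

open Filter Topology

lemma l0_eq_card_spt {n : ℕ} (x : Fin n → ℝ) : l0 x = (spt x).card := rfl

lemma mem_spt {n : ℕ} {x : Fin n → ℝ} {i : Fin n} : i ∈ spt x ↔ x i ≠ 0 := by
  simp [spt]

lemma isClosed_setOf_spt_subset {n : ℕ} (S : Finset (Fin n)) :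
    IsClosed {x : Fin n → ℝ | spt x ⊆ S} := by
  have h : {x : Fin n → ℝ | spt x ⊆ S} = ⋂ j ∈ Sᶜ, {x | x j = 0} := by
    ext x
    simp only [Set.mem_ofPred_eq, Set.mem_iInter, Finset.mem_compl, Finset.subset_iff, mem_spt]
    exact forall_congr' fun j => not_imp_comm
  rw [h]
  exact isClosed_biInter fun j _ => isClosed_eq (continuous_apply j) continuous_const

lemma IsCompact.eventually_le_of_pos {X : Type*} [TopologicalSpace X] {K : Set X}
    (hK : IsCompact K) {f : X → ℝ} (hf : ContinuousOn f K) (hpos : ∀ x ∈ K, 0 < f x) :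
    ∀ᶠ γ in 𝓝[>] 0, ∀ x ∈ K, γ ≤ f x := by
  rcases K.eq_empty_or_nonempty with rfl | hne
  · exact Eventually.of_forall fun _ x hx => absurd hx (Set.notMem_empty x)
  obtain ⟨z, hz, hmin⟩ := hK.exists_isMinOn hne hf
  filter_upwards [nhdsWithin_le_nhds (eventually_lt_nhds (hpos z hz))] with γ hγ x hx
  exact hγ.le.trans (hmin hx)

section Sparsest

variable {m l n : ℕ} (A : Matrix (Fin m) (Fin n) ℝ) (B : Matrix (Fin l) (Fin n) ℝ)
  (y : Fin m → ℝ) (b : Fin l → ℝ) (ε : ℝ)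

lemma isClosed_setOf_feasible : IsClosed {x | feasible A B y b ε x} := by
  simp only [feasible, l2, Set.ofPred_and, Set.ofPred_forall]
  exact (isClosed_le (by fun_prop) continuous_const).inter
    (isClosed_iInter fun i => isClosed_le (by fun_prop) continuous_const)

lemma isClosed_setOf_sparsest_spt_eq (S : Finset (Fin n)) :
    IsClosed {x | sparsest A B y b ε x ∧ spt x = S} := by
  refine isClosed_of_closure_subset fun x hx => ?_
  obtain ⟨x₀, hx₀, hx₀S⟩ := closure_nonempty_iff.1 ⟨x, hx⟩
  have hcl : closure {x | sparsest A B y b ε x ∧ spt x = S} ⊆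
      {x | feasible A B y b ε x} ∩ {x | spt x ⊆ S} :=
    closure_minimal (fun z hz => ⟨hz.1.1, hz.2.le⟩)
      ((isClosed_setOf_feasible A B y b ε).inter (isClosed_setOf_spt_subset S))
  obtain ⟨hfeas, hsub⟩ := hcl hx
  have hx₀_le : ∀ z, feasible A B y b ε z → S.card ≤ l0 z := fun z hz =>
    hx₀S ▸ hx₀.2 z hz
  have hS : spt x = S := Finset.eq_of_subset_of_card_le hsub (hx₀_le x hfeas)
  exact ⟨⟨hfeas, fun z hz => (l0_eq_card_spt x).trans_le (hS ▸ hx₀_le z hz)⟩, hS⟩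

lemma isCompact_setOf_sparsest_spt_eq {M : ℝ}
    (hM : ∀ x, sparsest A B y b ε x → ∀ i, |x i| ≤ M) (S : Finset (Fin n)) :
    IsCompact {x | sparsest A B y b ε x ∧ spt x = S} :=
  (isCompact_univ_pi fun _ => isCompact_Icc (a := -M) (b := M)).of_isClosed_subset
    (isClosed_setOf_sparsest_spt_eq A B y b ε S)
    fun x hx i _ => abs_le.1 (hM x hx.1 i)

lemma eventually_le_abs_of_sparsest_spt_eq {M : ℝ}
    (hM : ∀ x, sparsest A B y b ε x → ∀ i, |x i| ≤ M) (S : Finset (Fin n)) (i : Fin n) :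
    ∀ᶠ γ in 𝓝[>] 0, ∀ x, sparsest A B y b ε x → spt x = S → x i ≠ 0 → γ ≤ |x i| := by
  by_cases hi : i ∈ S
  · filter_upwards [(isCompact_setOf_sparsest_spt_eq A B y b ε hM S).eventually_le_of_pos
      (continuous_apply i).abs.continuousOn fun x hx => abs_pos.2 (mem_spt.1 (hx.2 ▸ hi))]
      with γ hγ x hx hxS _
    exact hγ x ⟨hx, hxS⟩
  · exact Eventually.of_forall fun _ x _ hxS hxi => absurd (hxS ▸ mem_spt.2 hxi) hi

end Sparsest

theorem stmt9_general {m l n : ℕ} (A : Matrix (Fin m) (Fin n) ℝ) (B : Matrix (Fin l) (Fin n) ℝ)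
    (y : Fin m → ℝ) (b : Fin l → ℝ) (ε : ℝ)
    (hbd : ∃ M : ℝ, ∀ x : Fin n → ℝ, sparsest A B y b ε x → ∀ i, |x i| ≤ M) :
    ∃ γ : ℝ, 0 < γ ∧ ∀ x : Fin n → ℝ, sparsest A B y b ε x →
      ∀ i, x i ≠ 0 → γ ≤ |x i| := by
  obtain ⟨M, hM⟩ := hbd
  have hall := eventually_all.2 fun S => eventually_all.2
    (eventually_le_abs_of_sparsest_spt_eq A B y b ε hM S)
  obtain ⟨γ, hγ, hpos⟩ := (hall.and self_mem_nhdsWithin).exists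
  exact ⟨γ, hpos, fun x hx i hi => hγ (spt x) i x hx rfl hi⟩

/-- if the set Λ of sparsest solutions is nonempty and bounded, the
absolute values of nonzero entries of its members are bounded below by a positive
constant γ*. -/
theorem stmt9 {m l n : ℕ} (A : Matrix (Fin m) (Fin n) ℝ) (B : Matrix (Fin l) (Fin n) ℝ)
    (y : Fin m → ℝ) (b : Fin l → ℝ) (ε : ℝ) (hε : 0 ≤ ε)
    (hne : ∃ x : Fin n → ℝ, sparsest A B y b ε x)
    (hbd : ∃ M : ℝ, ∀ x : Fin n → ℝ, sparsest A B y b ε x → ∀ i, |x i| ≤ M) :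
    ∃ γ : ℝ, 0 < γ ∧ ∀ x : Fin n → ℝ, sparsest A B y b ε x →
      ∀ i, x i ≠ 0 → γ ≤ |x i| :=
  stmt9_general A B y b ε hbd
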